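/- arXiv:1601.02760 — 5 statements merged into one kernel-verified Lean document; each statement's English description precedes it below -/
import Mathlib

section
/- For every graph G, M(G) ≤ Δ⁺(G). -/
open SimpleGraph

/-- The set `W` induces a path in `G`. -/
def InducesPath {V : Type*} (G : SimpleGraph V) (W : Set V) : Prop :=
  ∃ n : ℕ, Nonempty ((G.induce W) ≃g SimpleGraph.pathGraph n)

/-- The set `U` is covered by `p` vertex-disjoint induced paths of `G`. -/
def IsPathCoverOn {V : Type*} (G : SimpleGraph V) (U : Set V) (p : ℕ) : Prop :=
  ∃ parts : Fin p → Set V,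
    (∀ i, (parts i).Nonempty) ∧
    (Pairwise fun i j => Disjoint (parts i) (parts j)) ∧
    (⋃ i, parts i) = U ∧
    ∀ i, InducesPath G (parts i)

/-- The induced subgraph of `G` on `U` is a vertex-disjoint union of `p` paths. -/
def IsDisjointPathsOn {V : Type*} (G : SimpleGraph V) (U : Set V) (p : ℕ) : Prop :=
  ∃ parts : Fin p → Set V,
    (∀ i, (parts i).Nonempty) ∧
    (Pairwise fun i j => Disjoint (parts i) (parts j)) ∧
    (⋃ i, parts i) = U ∧
    (∀ i, InducesPath G (parts i)) ∧
    (∀ i j, i ≠ j → ∀ u ∈ parts i, ∀ v ∈ parts j, ¬ G.Adj u v)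

/-- The path cover number `P(G)`. -/
noncomputable def pathCoverNumber {V : Type*} (G : SimpleGraph V) : ℕ :=
  sInf {p | IsPathCoverOn G Set.univ p}

/-- `Δ(G)`: max of `p - q` over deletions of `q` vertices leaving `p` disjoint paths. -/
noncomputable def deltaLow {V : Type*} [Fintype V] (G : SimpleGraph V) : ℤ :=
  sSup {d : ℤ | ∃ (S : Finset V) (p : ℕ),
    IsDisjointPathsOn G ((↑S : Set V)ᶜ) p ∧ d = (p : ℤ) - S.card}

/-- `Δ⁺(G)`: min of `p + q` over deletions of `q` vertices leaving `p` disjoint paths. -/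
noncomputable def deltaPlus {V : Type*} [Fintype V] (G : SimpleGraph V) : ℕ :=
  sInf {k | ∃ (S : Finset V) (p : ℕ),
    IsDisjointPathsOn G ((↑S : Set V)ᶜ) p ∧ k = p + S.card}

/-- `T⁻(G)`. -/
noncomputable def Tminus {V : Type*} [Fintype V] (G : SimpleGraph V) : ℤ :=
  sSup {d : ℤ | ∃ S : Finset V, (G.induce ((↑S : Set V)ᶜ)).IsAcyclic ∧
    d = (pathCoverNumber (G.induce ((↑S : Set V)ᶜ)) : ℤ) - S.card}

/-- `T⁺(G)`. -/
noncomputable def Tplus {V : Type*} [Fintype V] (G : SimpleGraph V) : ℕ :=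
  sInf {k | ∃ S : Finset V, (G.induce ((↑S : Set V)ᶜ)).IsAcyclic ∧
    k = pathCoverNumber (G.induce ((↑S : Set V)ᶜ)) + S.card}

/-- `A` is a symmetric real matrix whose graph is `G`, i.e. `A ∈ S(G)`. -/
def MatchesGraph {V : Type*} [Fintype V] (G : SimpleGraph V) (A : Matrix V V ℝ) : Prop :=
  A.IsSymm ∧ ∀ i j : V, i ≠ j → (A i j ≠ 0 ↔ G.Adj i j)

/-- The nullity of a square real matrix. -/
noncomputable def matNullity {V : Type*} [Fintype V] (A : Matrix V V ℝ) : ℕ :=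
  Module.finrank ℝ (LinearMap.ker A.mulVecLin)

/-- `M(G)`: the maximum nullity (= maximum eigenvalue multiplicity). -/
noncomputable def maxNullity {V : Type*} [Fintype V] [DecidableEq V] (G : SimpleGraph V) : ℕ :=
  sSup {k | ∃ A : Matrix V V ℝ, MatchesGraph G A ∧ matNullity A = k}

/-- `mr(G)`: the minimum rank. -/
noncomputable def minRank {V : Type*} [Fintype V] [DecidableEq V] (G : SimpleGraph V) : ℕ :=
  sInf {k | ∃ A : Matrix V V ℝ, MatchesGraph G A ∧ A.rank = k}

/-- Vertices colored by the zero forcing process started from `B`. -/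
inductive ZFClosed {V : Type*} (G : SimpleGraph V) (B : Set V) : V → Prop
  | init (v : V) (h : v ∈ B) : ZFClosed G B v
  | force (u v : V) (hu : ZFClosed G B u) (huv : G.Adj u v)
      (hforce : ∀ w, G.Adj u w → w ≠ v → ZFClosed G B w) : ZFClosed G B v

/-- `B` is a zero forcing set of `G`. -/
def IsZeroForcingSet {V : Type*} (G : SimpleGraph V) (B : Set V) : Prop :=
  ∀ v, ZFClosed G B v

/-- `Z(G)`: the zero forcing number. -/
noncomputable def zeroForcingNumber {V : Type*} [Fintype V] (G : SimpleGraph V) : ℕ :=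
  sInf {k | ∃ B : Finset V, IsZeroForcingSet G ↑B ∧ B.card = k}

/-- The star graph on `Fin n`: vertex `0` adjacent to all others. -/
def starGraph (n : ℕ) : SimpleGraph (Fin n) :=
  SimpleGraph.fromRel (fun i _ => i.val = 0)

/-- The wheel graph: a hub (`none`) joined to every vertex of a cycle on `Fin m`. -/
def wheelGraph (m : ℕ) : SimpleGraph (Option (Fin m)) :=
  SimpleGraph.fromRel (fun u v =>
    match u, v with
    | none, some _ => True
    | some i, some j => j.val = (i.val + 1) % m
    | _, _ => False)

/-- The `n`-sun: a cycle on `Fin n` (the `inl` vertices) with a pendant vertex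
(`inr i`) attached to each cycle vertex (`inl i`). -/
def sunGraph (n : ℕ) : SimpleGraph (Fin n ⊕ Fin n) :=
  SimpleGraph.fromRel (fun u v =>
    match u, v with
    | .inl i, .inl j => j.val = (i.val + 1) % n
    | .inl i, .inr j => i = j
    | _, _ => False)

/-!
A null vector of a matrix in `S(G)` that vanishes on a zero forcing set vanishes everywhere: if `x`
vanishes at `u` and at all neighbours of `u` but `v`, the row of `u` in `A x = 0` reads
`A u v * x v = 0` with `A u v ≠ 0`. Hence the nullity is at most the size of any zero forcing set.
Deleting `q` vertices so that `p` disjoint induced paths remain, the deleted vertices together with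
one end of each path form a zero forcing set, since each path can then be coloured from its end.
-/

namespace MatchesGraph

variable {V : Type*} [Fintype V] {G : SimpleGraph V} {A : Matrix V V ℝ}

theorem apply_eq_zero (hA : MatchesGraph G A) {u w : V} (huw : u ≠ w) (hadj : ¬ G.Adj u w) :
    A u w = 0 :=
  not_not.mp fun h => hadj ((hA.2 u w huw).mp h)

theorem eq_zero_of_zfClosed (hA : MatchesGraph G A) {x : V → ℝ} (hx : A.mulVec x = 0) {B : Set V}
    (hB : ∀ v ∈ B, x v = 0) {v : V} (hv : ZFClosed G B v) : x v = 0 := by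
  induction hv with
  | init v h => exact hB v h
  | force u v _ huv _ ihu ihw =>
    have hrow : ∑ w, A u w * x w = A u v * x v := by
      refine Finset.sum_eq_single v (fun w _ hwv => ?_) (by simp)
      by_cases hwu : w = u
      · rw [hwu, ihu, mul_zero]
      by_cases hadj : G.Adj u w
      · rw [ihw w hadj hwv, mul_zero]
      · rw [hA.apply_eq_zero (Ne.symm hwu) hadj, zero_mul]
    have hAv : A u v * x v = 0 := hrow ▸ congrFun hx u
    exact (mul_eq_zero.mp hAv).resolve_left ((hA.2 u v huv.ne).mpr huv)

theorem matNullity_le_card_of_isZeroForcingSet (hA : MatchesGraph G A) {B : Finset V}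
    (hB : IsZeroForcingSet G ↑B) : matNullity A ≤ B.card := by
  let restrict : LinearMap.ker A.mulVecLin →ₗ[ℝ] (B → ℝ) :=
    LinearMap.funLeft ℝ ℝ ((↑) : B → V) ∘ₗ Submodule.subtype _
  have hinj : Function.Injective restrict := by
    rw [injective_iff_map_eq_zero]
    rintro ⟨x, hx⟩ hx0
    ext v
    exact hA.eq_zero_of_zfClosed hx (fun v hv => congrFun hx0 ⟨v, hv⟩) (hB v)
  simpa [matNullity] using LinearMap.finrank_le_finrank_of_injective hinj

end MatchesGraph

section ZeroForcing

variable {V : Type*} {G : SimpleGraph V}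

theorem zfClosed_of_pathGraph_iso {B W : Set V} {n : ℕ} (e : pathGraph n ≃g G.induce W)
    (hout : ∀ u ∈ W, ∀ w ∉ W, G.Adj u w → ZFClosed G B w)
    (hstart : ∀ h : 0 < n, ZFClosed G B (e ⟨0, h⟩)) (k : Fin n) : ZFClosed G B (e k) := by
  suffices h : ∀ t, ∀ l : Fin n, l.val ≤ t → ZFClosed G B (e l) from h k k le_rfl
  intro t
  induction t with
  | zero =>
    intro l hl
    rw [show l = ⟨0, l.pos⟩ from Fin.ext (Nat.le_zero.mp hl)]
    exact hstart l.pos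
  | succ t ih =>
    intro l hl
    rcases Nat.lt_or_eq_of_le hl with hl | hl
    · exact ih l (Nat.le_of_lt_succ hl)
    let m : Fin n := ⟨t, by omega⟩
    have hadj : G.Adj (e m) (e l) := e.map_adj_iff.mpr (pathGraph_adj.mpr (.inl hl.symm))
    refine .force _ _ (ih m le_rfl) hadj fun w huw hwl => ?_
    by_cases hw : w ∈ W
    · obtain ⟨l', hl'⟩ := e.surjective ⟨w, hw⟩
      obtain rfl : (e l' : V) = w := congrArg Subtype.val hl'
      have hne : l' ≠ l := fun h => hwl (by rw [h])
      rcases pathGraph_adj.mp (e.map_adj_iff.mp huw) with h | h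
      · exact absurd (Fin.ext (by simp only [m] at h; omega)) hne
      · exact ih l' (by simp only [m] at h; omega)
    · exact hout _ (e m).2 w hw huw

theorem exists_isZeroForcingSet_card_le [Fintype V] [DecidableEq V] {S : Finset V} {p : ℕ}
    (h : IsDisjointPathsOn G (↑S)ᶜ p) :
    ∃ B : Finset V, IsZeroForcingSet G ↑B ∧ B.card ≤ p + S.card := by
  obtain ⟨parts, hne, -, hcover, hpath, hsep⟩ := h
  choose n hiso using hpath
  let e i : pathGraph (n i) ≃g G.induce (parts i) := (hiso i).some.symm
  have npos i : 0 < n i := by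
    obtain ⟨v, hv⟩ := hne i
    exact Fin.pos ((e i).symm ⟨v, hv⟩)
  let start i : V := e i ⟨0, npos i⟩
  refine ⟨S ∪ Finset.univ.image start, fun v => ?_, ?_⟩
  · by_cases hvS : v ∈ S
    · exact .init v (by simp [hvS])
    obtain ⟨i, hv⟩ := Set.mem_iUnion.mp (hcover ▸ hvS : v ∈ ⋃ i, parts i)
    have hvi : ((e i ((e i).symm ⟨v, hv⟩)) : V) = v := by simp
    refine hvi ▸ zfClosed_of_pathGraph_iso (e i) ?_ ?_ _
    · intro u hu w hw huw
      have hwS : w ∈ S := by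
        by_contra hwS
        obtain ⟨j, hj⟩ := Set.mem_iUnion.mp (hcover ▸ hwS : w ∈ ⋃ i, parts i)
        exact hsep i j (by rintro rfl; exact hw hj) u hu w hj huw
      exact .init w (by simp [hwS])
    · exact fun _ => .init _ (by simp [start])
  · calc (S ∪ Finset.univ.image start).card
        ≤ S.card + (Finset.univ.image start).card := Finset.card_union_le _ _
      _ ≤ S.card + p := by
        grw [Finset.card_image_le, Finset.card_univ, Fintype.card_fin]
      _ = p + S.card := add_comm _ _

end ZeroForcing

theorem maxNullity_le_deltaPlus {V : Type*} [Fintype V] [DecidableEq V]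
    (G : SimpleGraph V) :
    maxNullity G ≤ deltaPlus G := by
  have hdelete_all : IsDisjointPathsOn G (↑(Finset.univ : Finset V))ᶜ 0 :=
    ⟨finZeroElim, finZeroElim, fun i => i.elim0, by simp, finZeroElim, finZeroElim⟩
  refine le_csInf ⟨_, Finset.univ, 0, hdelete_all, rfl⟩ ?_
  rintro _ ⟨S, p, hS, rfl⟩
  obtain ⟨B, hB, hcard⟩ := exists_isZeroForcingSet_card_le hS
  refine csSup_le' ?_
  rintro _ ⟨A, hA, rfl⟩
  exact (hA.matNullity_le_card_of_isZeroForcingSet hB).trans hcard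
end

section
/- For every graph G, Δ(G) ≤ M(G) ≤ Δ⁺(G). -/
open SimpleGraph

/-! If `G - S` is a disjoint union of `p` induced paths, then `S` together with one end of each
path is a zero forcing set of `G`. Zeros propagate along forcing steps in the kernel of any
`A ∈ S(G)`, so the kernel embeds in the functions on that set and `M(G) ≤ p + |S|`.
Conversely, a suitable matrix in `S(G)` maps the `p` independent indicator vectors of the paths
to vectors supported on `S`, so at least `p - |S|` independent combinations of them lie in its
kernel. -/

open Matrix

theorem linearIndependent_indicator_one {V ι R : Type*} [Ring R] {s : ι → Set V}
    (hne : ∀ i, (s i).Nonempty) (hdisj : Pairwise fun i j => Disjoint (s i) (s j)) :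
    LinearIndependent R fun i => (s i).indicator (1 : V → R) := by
  classical
  rw [linearIndependent_iff']
  intro t g hg i hi
  obtain ⟨x, hx⟩ := hne i
  have hgx := congrFun hg x
  rwa [Finset.sum_apply, Finset.sum_eq_single_of_mem i hi fun j _ hji => by
    simp [Set.indicator_of_notMem (Set.disjoint_left.mp (hdisj hji.symm) hx)],
    Pi.smul_apply, Set.indicator_of_mem hx, Pi.one_apply, smul_eq_mul, mul_one] at hgx

theorem card_le_matNullity_add_card {V ι : Type*} [Fintype ι] [Fintype V] {A : Matrix V V ℝ}
    {S : Finset V} {y : ι → V → ℝ} (hy : LinearIndependent ℝ y)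
    (hAy : ∀ i, ∀ u ∉ S, (A *ᵥ y i) u = 0) :
    Fintype.card ι ≤ matNullity A + S.card := by
  let L := Fintype.linearCombination ℝ y
  let g := LinearMap.funLeft ℝ ℝ ((↑) : S → V) ∘ₗ A.mulVecLin ∘ₗ L
  have hmap : (LinearMap.ker g).map L ≤ LinearMap.ker A.mulVecLin := by
    rintro _ ⟨c, hc, rfl⟩
    ext u
    by_cases huS : u ∈ S
    · exact congrFun hc ⟨u, huS⟩
    · simp [L, Fintype.linearCombination_apply, hAy _ u huS]
  have hker : Module.finrank ℝ (LinearMap.ker g) ≤ matNullity A :=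
    (LinearEquiv.finrank_eq (Submodule.equivMapOfInjective L
      hy.fintypeLinearCombination_injective _)).trans_le (Submodule.finrank_mono hmap)
  have hrange : Module.finrank ℝ (LinearMap.range g) ≤ S.card := by
    simpa using Submodule.finrank_le (LinearMap.range g)
  have := LinearMap.finrank_range_add_finrank_ker g
  simp only [Module.finrank_fintype_fun_eq_card] at this
  omega

namespace SimpleGraph

variable {V : Type*} {G : SimpleGraph V}

theorem ZFClosed.apply_eq_zero [Fintype V] {A : Matrix V V ℝ} (hA : MatchesGraph G A)
    {B : Set V} {x : V → ℝ} (hx : A *ᵥ x = 0) (hxB : ∀ v ∈ B, x v = 0) {v : V}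
    (hv : ZFClosed G B v) : x v = 0 := by
  induction hv with
  | init v hvB => exact hxB v hvB
  | force u v _ huv _ ihu ihw =>
    have hoff : ∀ w, w ≠ v → A u w * x w = 0 := by
      intro w hwv
      by_cases hwu : w = u
      · rw [hwu, ihu, mul_zero]
      by_cases huw : G.Adj u w
      · rw [ihw w huw hwv, mul_zero]
      · rw [not_ne_iff.mp (mt (hA.2 u w (Ne.symm hwu)).1 huw), zero_mul]
    have hrow : ∑ w, A u w * x w = 0 := congrFun hx u
    rw [Finset.sum_eq_single v (fun w _ => hoff w) (by simp)] at hrow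
    exact (mul_eq_zero.mp hrow).resolve_left ((hA.2 u v huv.ne).2 huv)

theorem matNullity_le_card_of_isZeroForcingSet [Fintype V] {A : Matrix V V ℝ}
    (hA : MatchesGraph G A) {B : Finset V} (hB : IsZeroForcingSet G ↑B) :
    matNullity A ≤ B.card := by
  let restrict := LinearMap.funLeft ℝ ℝ ((↑) : B → V) ∘ₗ (LinearMap.ker A.mulVecLin).subtype
  have hinj : Function.Injective restrict := by
    rw [← LinearMap.ker_eq_bot, LinearMap.ker_eq_bot']
    intro x hx
    ext v
    exact (hB v).apply_eq_zero hA x.2 fun u hu => congrFun hx ⟨u, hu⟩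
  simpa [matNullity] using LinearMap.finrank_le_finrank_of_injective hinj

theorem maxNullity_le_card_of_isZeroForcingSet [Fintype V] [DecidableEq V] {B : Finset V}
    (hB : IsZeroForcingSet G ↑B) : maxNullity G ≤ B.card :=
  csSup_le' fun _ ⟨_, hA, hk⟩ => hk ▸ matNullity_le_card_of_isZeroForcingSet hA hB

theorem matNullity_le_maxNullity [Fintype V] [DecidableEq V] {A : Matrix V V ℝ}
    (hA : MatchesGraph G A) : matNullity A ≤ maxNullity G := by
  refine le_csSup ⟨Fintype.card V, ?_⟩ ⟨A, hA, rfl⟩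
  rintro _ ⟨B, -, rfl⟩
  simpa [matNullity] using Submodule.finrank_le (LinearMap.ker B.mulVecLin)

/-- `f (k + 1)` is forced by `f k`, whose other neighbours are `f (k - 1)` and vertices off
the path. -/
theorem zfClosed_of_pathGraph_embedding {B : Set V} {n : ℕ} (f : pathGraph n ↪g G)
    (hhead : ∀ h : 0 < n, ZFClosed G B (f ⟨0, h⟩))
    (hout : ∀ k w, G.Adj (f k) w → w ∉ Set.range f → ZFClosed G B w) (k : Fin n) :
    ZFClosed G B (f k) := by
  obtain ⟨m, hm⟩ := k
  induction m using Nat.strong_induction_on with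
  | _ m ih =>
    match m, ih, hm with
    | 0, _, hm => exact hhead hm
    | t + 1, ih, hm =>
      have hadj : G.Adj (f ⟨t, by omega⟩) (f ⟨t + 1, hm⟩) := by
        rw [f.map_adj_iff, pathGraph_adj]
        exact Or.inl rfl
      refine .force _ _ (ih t (by omega) _) hadj fun w hw hne => ?_
      by_cases hwf : w ∈ Set.range f
      · obtain ⟨⟨j, hj⟩, rfl⟩ := hwf
        rw [f.map_adj_iff, pathGraph_adj] at hw
        dsimp only at hw
        have hjt : j ≠ t + 1 := fun h => hne (by subst h; rfl)
        exact ih j (by omega) hj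
      · exact hout _ w hw hwf

theorem mem_of_adj_of_notMem {S : Finset V} {p : ℕ} {parts : Fin p → Set V}
    (hcover : (⋃ i, parts i) = (↑S)ᶜ)
    (hcross : ∀ i j, i ≠ j → ∀ u ∈ parts i, ∀ v ∈ parts j, ¬ G.Adj u v)
    {i : Fin p} {u v : V} (hu : u ∈ parts i) (huv : G.Adj u v) (hv : v ∉ S) : v ∈ parts i := by
  obtain ⟨j, hvj⟩ := Set.mem_iUnion.mp (hcover ▸ hv : v ∈ ⋃ j, parts j)
  obtain rfl : i = j := by_contra fun hij => hcross i j hij u hu v hvj huv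
  exact hvj

theorem IsDisjointPathsOn.exists_isZeroForcingSet [Fintype V] {S : Finset V} {p : ℕ}
    (h : IsDisjointPathsOn G (↑S)ᶜ p) :
    ∃ B : Finset V, IsZeroForcingSet G ↑B ∧ B.card ≤ S.card + p := by
  classical
  obtain ⟨parts, hne, -, hcover, hpath, hcross⟩ := h
  choose n e using hpath
  let f i : pathGraph (n i) ↪g G := (Embedding.induce (parts i)).comp (e i).some.symm.toEmbedding
  have hrange i : Set.range (f i) = parts i := by
    ext v
    refine ⟨fun ⟨k, hk⟩ => hk ▸ ((e i).some.symm k).2, fun hv => ⟨(e i).some ⟨v, hv⟩, ?_⟩⟩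
    simp [f]
  have hpos i : 0 < n i := by
    obtain ⟨v, hv⟩ := hne i
    exact ((e i).some ⟨v, hv⟩).pos
  refine ⟨S ∪ Finset.univ.image fun i => f i ⟨0, hpos i⟩, fun v => ?_, ?_⟩
  · by_cases hvS : v ∈ S
    · exact .init v (by simp [hvS])
    obtain ⟨i, hvi⟩ := Set.mem_iUnion.mp (hcover ▸ hvS : v ∈ ⋃ i, parts i)
    obtain ⟨k, rfl⟩ : v ∈ Set.range (f i) := hrange i ▸ hvi
    refine zfClosed_of_pathGraph_embedding (f i) (fun _ => .init _ ?_) (fun k w hw hwf => ?_) k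
    · simp only [Finset.coe_union, Finset.coe_image, Finset.coe_univ, Set.image_univ]
      exact Or.inr ⟨i, rfl⟩
    · refine .init w (Finset.mem_coe.mpr (Finset.mem_union_left _ ?_))
      by_contra hwS
      exact hwf (hrange i ▸ mem_of_adj_of_notMem hcover hcross (hrange i ▸ ⟨k, rfl⟩) hw hwS)
  · calc _ ≤ S.card + (Finset.univ.image fun i => f i ⟨0, hpos i⟩).card := Finset.card_union_le _ _
      _ ≤ S.card + p := by grw [Finset.card_image_le, Finset.card_univ, Fintype.card_fin]

theorem matchesGraph_adjMatrix_sub_diagonal [Fintype V] [DecidableEq V] [DecidableRel G.Adj]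
    (d : V → ℝ) : MatchesGraph G (G.adjMatrix ℝ - diagonal d) := by
  refine ⟨(isSymm_adjMatrix G).sub (isSymm_diagonal d), fun i j hij => ?_⟩
  by_cases h : G.Adj i j <;> simp [h, hij]

theorem exists_matchesGraph_card_le_matNullity_add_card [Fintype V] [DecidableEq V]
    {S : Finset V} {p : ℕ} {parts : Fin p → Set V} (hne : ∀ i, (parts i).Nonempty)
    (hdisj : Pairwise fun i j => Disjoint (parts i) (parts j))
    (hcover : (⋃ i, parts i) = (↑S)ᶜ)
    (hcross : ∀ i j, i ≠ j → ∀ u ∈ parts i, ∀ v ∈ parts j, ¬ G.Adj u v) :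
    ∃ A : Matrix V V ℝ, MatchesGraph G A ∧ p ≤ matNullity A + S.card := by
  classical
  -- On vectors vanishing on `S`, the rows outside `S` of `adjMatrix - diagonal d` act as minus
  -- the Laplacian of `G - S`, which kills the indicator of each part.
  let d := G.adjMatrix ℝ *ᵥ (↑S : Set V)ᶜ.indicator 1
  refine ⟨G.adjMatrix ℝ - diagonal d, matchesGraph_adjMatrix_sub_diagonal d, ?_⟩
  suffices hker : ∀ j, ∀ u ∉ S, ((G.adjMatrix ℝ - diagonal d) *ᵥ (parts j).indicator 1) u = 0 by
    simpa using card_le_matNullity_add_card (linearIndependent_indicator_one hne hdisj) hker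
  intro j u huS
  obtain ⟨i, hui⟩ := Set.mem_iUnion.mp (hcover ▸ huS : u ∈ ⋃ i, parts i)
  have hself : (parts j).indicator (1 : V → ℝ) u = if i = j then 1 else 0 := by
    split_ifs with hij
    · exact Set.indicator_of_mem (hij ▸ hui) _
    · exact Set.indicator_of_notMem (Set.disjoint_left.mp (hdisj hij) hui) _
  have hnbr : (G.adjMatrix ℝ *ᵥ (parts j).indicator 1) u = if i = j then d u else 0 := by
    simp only [d, adjMatrix_mulVec_apply]
    rw [← Finset.sum_const_zero, ← Finset.sum_ite_irrel]
    refine Finset.sum_congr rfl fun v hv => ?_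
    rw [mem_neighborFinset] at hv
    by_cases hvS : v ∈ S
    · have hvj : v ∉ parts j := fun hvj =>
        (hcover ▸ Set.mem_iUnion.mpr ⟨j, hvj⟩ : v ∈ (↑S : Set V)ᶜ) hvS
      split_ifs <;> simp [hvS, hvj]
    · have hvi := mem_of_adj_of_notMem hcover hcross hui hv hvS
      split_ifs with hij
      · subst hij; simp [hvS, hvi]
      · simp [Set.indicator_of_notMem (Set.disjoint_left.mp (hdisj hij) hvi)]
  rw [sub_mulVec, Pi.sub_apply, mulVec_diagonal, hnbr, hself]
  split_ifs <;> simp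

theorem isDisjointPathsOn_compl_univ [Fintype V] :
    IsDisjointPathsOn G (↑(Finset.univ : Finset V))ᶜ 0 :=
  ⟨Fin.elim0, fun i => i.elim0, fun i => i.elim0, by simp, fun i => i.elim0, fun i => i.elim0⟩

end SimpleGraph

theorem deltaLow_le_maxNullity_le_deltaPlus {V : Type*} [Fintype V] [DecidableEq V]
    (G : SimpleGraph V) :
    deltaLow G ≤ (maxNullity G : ℤ) ∧ maxNullity G ≤ deltaPlus G := by
  have hempty : IsDisjointPathsOn G (↑(Finset.univ : Finset V))ᶜ 0 := isDisjointPathsOn_compl_univ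
  constructor
  · refine csSup_le ⟨_, Finset.univ, 0, hempty, rfl⟩ ?_
    rintro _ ⟨S, p, ⟨parts, hne, hdisj, hcover, -, hcross⟩, rfl⟩
    obtain ⟨A, hA, hp⟩ := exists_matchesGraph_card_le_matNullity_add_card hne hdisj hcover hcross
    have := matNullity_le_maxNullity hA
    omega
  · refine le_csInf ⟨_, Finset.univ, 0, hempty, rfl⟩ ?_
    rintro _ ⟨S, p, hS, rfl⟩
    obtain ⟨B, hB, hcard⟩ := hS.exists_isZeroForcingSet
    have := maxNullity_le_card_of_isZeroForcingSet hB
    omega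
end

section
/- For every graph G, Δ(G) = T⁻(G). -/
open SimpleGraph

/-!
`Δ(G) ≤ T⁻(G)`: if deleting `S` leaves `p` disjoint induced paths, then `G ∖ S` is a forest, and
since every path of a cover of `G ∖ S` lies inside one of these `p` paths, `P(G ∖ S) ≥ p`.

`T⁻(G) ≤ Δ(G)` reduces to `Δ(F) ≥ P(F)` for a forest `F`, by induction on `|F|`. If every vertex
of `F` has degree at most two, `F` is a disjoint union of paths. Otherwise some branch vertex `v`
has two branches `B₁`, `B₂` that are paths ending at neighbours of `v` (take a branch vertex in a
minimal branch containing one). In `F` the path `B₁ ∪ {v} ∪ B₂` replaces the at least two paths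
that any cover of `F ∖ v` spends on `B₁ ∪ B₂`, so `P(F ∖ v) ≥ P(F) + 1`, and deleting `v` costs
nothing.
-/

namespace SimpleGraph

theorem pathGraph_isAcyclic (n : ℕ) : (pathGraph n).IsAcyclic := by
  intro a c hc
  obtain ⟨m, hm, hmax⟩ := c.support.toFinset.exists_max_image Fin.val ⟨a, by simp⟩
  rw [List.mem_toFinset] at hm
  -- every cycle neighbour of the largest vertex `m` on the cycle is `m - 1`
  have hsub : c.toSubgraph.neighborSet m ⊆ {x | x.val + 1 = m.val} := fun x hx => by
    have hxm := hmax x (List.mem_toFinset.2 (c.mem_verts_toSubgraph.1 hx.snd_mem))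
    rcases pathGraph_adj.1 (c.toSubgraph.adj_sub hx) with h | h <;>
      simp only [Set.mem_ofPred_eq] <;> omega
  have hle := Set.ncard_le_ncard hsub (Set.toFinite _)
  have hone : {x : Fin n | x.val + 1 = m.val}.ncard ≤ 1 :=
    (Set.ncard_le_one).2 fun x hx y hy => Fin.ext (by simp only [Set.mem_ofPred_eq] at hx hy; omega)
  have := hc.ncard_neighborSet_toSubgraph_eq_two hm
  omega

variable {W : Type*} {H : SimpleGraph W}

theorem Walk.IsPath.mem_support_of_adj_of_longest [Finite W] {u w x y : W} {p : H.Walk u w}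
    (hp : p.IsPath) (hlong : ∀ (a b : W) (q : H.Walk a b), q.IsPath → q.length ≤ p.length)
    (hdeg : ∀ v, (H.neighborSet v).ncard ≤ 2) (hx : x ∈ p.support) (hxy : H.Adj x y) :
    y ∈ p.support := by
  by_contra hy
  obtain ⟨i, rfl, hi⟩ := Walk.mem_support_iff_exists_getVert.1 hx
  rcases Nat.eq_zero_or_pos i with rfl | hi0
  · rw [Walk.getVert_zero] at hxy
    have := hlong _ _ _ ((Walk.cons_isPath_iff hxy.symm p).2 ⟨hp, hy⟩)
    simp at this
  rcases hi.eq_or_lt with rfl | hilt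
  · rw [Walk.getVert_length] at hxy
    have := hlong _ _ _ (hp.concat hy hxy)
    simp at this
  have hnbr : insert y (p.toSubgraph.neighborSet (p.getVert i)) ⊆ H.neighborSet (p.getVert i) :=
    Set.insert_subset hxy fun z hz => p.toSubgraph.adj_sub hz
  have hyN : y ∉ p.toSubgraph.neighborSet (p.getVert i) :=
    fun h => hy (p.mem_verts_toSubgraph.1 h.snd_mem)
  have h3 := Set.ncard_le_ncard hnbr (Set.toFinite _)
  rw [Set.ncard_insert_of_notMem hyN (Set.toFinite _),
    hp.ncard_neighborSet_toSubgraph_internal_eq_two hi0.ne' hilt] at h3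
  linarith [hdeg (p.getVert i)]

theorem Walk.IsPath.toSubgraph_adj_of_adj [Finite W] {u w x y : W} {p : H.Walk u w}
    (hp : p.IsPath) (hacyc : H.IsAcyclic) (hdeg : ∀ v, (H.neighborSet v).ncard ≤ 2)
    (hx : x ∈ p.support) (hy : y ∈ p.support) (hxy : H.Adj x y) : p.toSubgraph.Adj x y := by
  have hnil : ¬ p.Nil := fun h => by
    rw [Walk.nil_iff_support_eq.1 h, List.mem_singleton] at hx hy
    exact hxy.ne (hx.trans hy.symm)
  obtain ⟨i, rfl, hi⟩ := Walk.mem_support_iff_exists_getVert.1 hx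
  rcases Nat.eq_zero_or_pos i with rfl | hi0
  · rw [Walk.getVert_zero] at hxy ⊢
    rw [hacyc.eq_snd_of_adj_start hp hxy hy]
    exact p.toSubgraph_adj_snd hnil
  rcases hi.eq_or_lt with rfl | hilt
  · rw [Walk.getVert_length] at hxy ⊢
    rw [hacyc.eq_penultimate_of_adj_end hp hxy hy]
    exact (p.toSubgraph_adj_penultimate hnil).symm
  have hN : p.toSubgraph.neighborSet (p.getVert i) = H.neighborSet (p.getVert i) :=
    Set.eq_of_subset_of_ncard_le (fun z hz => p.toSubgraph.adj_sub hz)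
      ((hdeg _).trans (hp.ncard_neighborSet_toSubgraph_internal_eq_two hi0.ne' hilt).ge)
  exact (hN ▸ hxy : y ∈ p.toSubgraph.neighborSet (p.getVert i))

theorem Connected.exists_iso_pathGraph [Finite W] (hconn : H.Connected) (hacyc : H.IsAcyclic)
    (hdeg : ∀ v, (H.neighborSet v).ncard ≤ 2) : ∃ n, Nonempty (H ≃g pathGraph n) := by
  classical
  have := Fintype.ofFinite W
  obtain ⟨⟨u, w, p, hp⟩, -, hlong⟩ := Finset.univ.exists_max_image
    (fun q : Σ a b : W, H.Path a b => q.2.2.1.length)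
    ⟨⟨_, _, Path.nil (u := hconn.nonempty.some)⟩, Finset.mem_univ _⟩
  replace hlong : ∀ (a b : W) (q : H.Walk a b), q.IsPath → q.length ≤ p.length :=
    fun a b q hq => hlong ⟨a, b, q, hq⟩ (Finset.mem_univ _)
  have hsupp : ∀ y, y ∈ p.support := fun y => by
    by_contra hy
    obtain ⟨d, -, hd, hd'⟩ := (hconn.preconnected u y).some.exists_boundary_dart
      {z | z ∈ p.support} p.start_mem_support hy
    exact hd' (hp.mem_support_of_adj_of_longest hlong hdeg hd d.adj)
  have htop : p.toSubgraph = ⊤ := by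
    ext x y
    · simp [hsupp]
    · exact ⟨fun h => h.adj_sub, hp.toSubgraph_adj_of_adj hacyc hdeg (hsupp x) (hsupp y)⟩
  exact ⟨_, ⟨(hp.pathGraphIsoToSubgraph.trans (htop ▸ Subgraph.topIso)).symm⟩⟩

end SimpleGraph

section

variable {V : Type*} {G : SimpleGraph V}

theorem ncard_neighborSet_induce (W : Set V) (x : W) :
    ((G.induce W).neighborSet x).ncard = (G.neighborSet x ∩ W).ncard := by
  rw [← Set.ncard_image_of_injective _ Subtype.val_injective]
  congr 1
  ext y
  simp [and_comm]

def DegreeLeTwoOn (G : SimpleGraph V) (U B : Set V) : Prop :=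
  ∀ x ∈ B, (G.neighborSet x ∩ U).ncard ≤ 2

theorem inducesPath_of_isAcyclic [Finite V] {W : Set V} (hconn : (G.induce W).Connected)
    (hacyc : (G.induce W).IsAcyclic) (hdeg : DegreeLeTwoOn G W W) : InducesPath G W :=
  hconn.exists_iso_pathGraph hacyc fun x => (ncard_neighborSet_induce W x).trans_le (hdeg x x.2)

theorem inducesPath_singleton [Finite V] (x : V) : InducesPath G {x} := by
  refine inducesPath_of_isAcyclic ?_ .of_subsingleton fun y hy => ?_
  · rw [induce_singleton_eq_top]
    exact connected_top
  · obtain rfl := hy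
    simp

theorem InducesPath.preconnected {W : Set V} (h : InducesPath G W) :
    (G.induce W).Preconnected :=
  let ⟨n, ⟨φ⟩⟩ := h
  φ.preconnected_iff.2 (pathGraph_preconnected n)

theorem InducesPath.isAcyclic {W : Set V} (h : InducesPath G W) : (G.induce W).IsAcyclic :=
  let ⟨n, ⟨φ⟩⟩ := h
  φ.isAcyclic_iff.2 (pathGraph_isAcyclic n)

noncomputable def induceInduceIso (U : Set V) (W : Set U) :
    (G.induce U).induce W ≃g G.induce (Subtype.val '' W) where
  toEquiv := Equiv.Set.image Subtype.val W Subtype.val_injective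
  map_rel_iff' := by simp [Equiv.Set.image, Equiv.Set.imageOfInjOn, comap_adj]

theorem inducesPath_induce_iff {U : Set V} {W : Set U} :
    InducesPath (G.induce U) W ↔ InducesPath G (Subtype.val '' W) :=
  ⟨fun ⟨n, ⟨φ⟩⟩ => ⟨n, ⟨(induceInduceIso U W).symm.trans φ⟩⟩,
    fun ⟨n, ⟨φ⟩⟩ => ⟨n, ⟨(induceInduceIso U W).trans φ⟩⟩⟩

theorem isPathCoverOn_induce_iff {U : Set V} {p : ℕ} :
    IsPathCoverOn (G.induce U) Set.univ p ↔ IsPathCoverOn G U p := by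
  constructor
  · rintro ⟨parts, hne, hdisj, hunion, hpath⟩
    refine ⟨fun i => Subtype.val '' parts i, fun i => (hne i).image _,
      fun i j hij => (Set.disjoint_image_iff Subtype.val_injective).2 (hdisj hij), ?_,
      fun i => inducesPath_induce_iff.1 (hpath i)⟩
    rw [← Set.image_iUnion, hunion, Set.image_univ, Subtype.range_coe]
  · rintro ⟨parts, hne, hdisj, hunion, hpath⟩
    have hsub : ∀ i, parts i ⊆ U := fun i => hunion ▸ Set.subset_iUnion parts i
    have himage : ∀ i, Subtype.val '' (Subtype.val ⁻¹' parts i : Set U) = parts i := fun i =>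
      Set.image_preimage_eq_of_subset (Subtype.range_coe.symm ▸ hsub i)
    refine ⟨fun i => Subtype.val ⁻¹' parts i, fun i => ?_, fun i j hij => (hdisj hij).preimage _,
      ?_, fun i => inducesPath_induce_iff.2 ((himage i).symm ▸ hpath i)⟩
    · exact (Set.image_nonempty.1 ((himage i).symm ▸ hne i))
    · rw [← Set.preimage_iUnion, hunion, Subtype.coe_preimage_self]

def IsPathPartition (G : SimpleGraph V) (U : Set V) (F : Finset (Set V)) : Prop :=
  (∀ P ∈ F, P.Nonempty ∧ InducesPath G P) ∧ (F : Set (Set V)).PairwiseDisjoint id ∧ ⋃₀ ↑F = U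

theorem IsPathPartition.isPathCoverOn_parts {U : Set V} {F : Finset (Set V)}
    (hF : IsPathPartition G U F) :
    let parts := fun i => (F.equivFin.symm i : Set V)
    (∀ i, (parts i).Nonempty) ∧ (Pairwise fun i j => Disjoint (parts i) (parts j)) ∧
      (⋃ i, parts i) = U ∧ ∀ i, InducesPath G (parts i) := by
  refine ⟨fun i => (hF.1 _ (F.equivFin.symm i).2).1, fun i j hij => ?_, ?_,
    fun i => (hF.1 _ (F.equivFin.symm i).2).2⟩
  · exact hF.2.1 (F.equivFin.symm i).2 (F.equivFin.symm j).2
      (fun h => hij (F.equivFin.symm.injective (Subtype.ext h)))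
  · rw [← hF.2.2, Set.sUnion_eq_iUnion]
    exact F.equivFin.symm.iSup_comp (g := fun P : F => (P : Set V))

theorem IsPathPartition.isPathCoverOn {U : Set V} {F : Finset (Set V)}
    (hF : IsPathPartition G U F) : IsPathCoverOn G U F.card :=
  ⟨_, hF.isPathCoverOn_parts⟩

theorem IsPathPartition.isDisjointPathsOn {U : Set V} {F : Finset (Set V)}
    (hF : IsPathPartition G U F)
    (hnadj : ∀ P ∈ F, ∀ Q ∈ F, P ≠ Q → ∀ x ∈ P, ∀ y ∈ Q, ¬ G.Adj x y) :
    IsDisjointPathsOn G U F.card := by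
  obtain ⟨hne, hdisj, hunion, hpath⟩ := hF.isPathCoverOn_parts
  refine ⟨_, hne, hdisj, hunion, hpath, fun i j hij => hnadj _ (F.equivFin.symm i).2 _
    (F.equivFin.symm j).2 fun h => hij (F.equivFin.symm.injective (Subtype.ext h))⟩

theorem IsPathCoverOn.exists_isPathPartition {U : Set V} {p : ℕ} (h : IsPathCoverOn G U p) :
    ∃ F, IsPathPartition G U F ∧ F.card = p := by
  classical
  obtain ⟨parts, hne, hdisj, hunion, hpath⟩ := h
  have hinj : Function.Injective parts := fun i j hij => by
    by_contra hne'
    obtain ⟨x, hx⟩ := hne i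
    exact Set.disjoint_left.1 (hdisj hne') hx (hij ▸ hx)
  refine ⟨Finset.univ.image parts, ⟨?_, ?_, ?_⟩, by simp [Finset.card_image_of_injective _ hinj]⟩
  · simp only [Finset.mem_image, Finset.mem_univ, true_and, forall_exists_index,
      forall_apply_eq_imp_iff]
    exact fun i => ⟨hne i, hpath i⟩
  · simp only [Finset.coe_image, Finset.coe_univ, Set.image_univ]
    rintro _ ⟨i, rfl⟩ _ ⟨j, rfl⟩ hij
    exact hdisj fun h => hij (congrArg parts h)
  · simpa using hunion

theorem isPathPartition_singletons [Finite V] (U : Set V) [Fintype U] :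
    IsPathPartition G U (U.toFinset.image ({·})) := by
  classical
  refine ⟨?_, ?_, ?_⟩
  · simp only [Finset.mem_image, forall_exists_index, and_imp]
    rintro _ x - rfl
    exact ⟨Set.singleton_nonempty x, inducesPath_singleton x⟩
  · simp only [Finset.coe_image]
    rintro _ ⟨x, -, rfl⟩ _ ⟨y, -, rfl⟩ hxy
    exact Set.disjoint_singleton.2 fun h => hxy (h ▸ rfl)
  · ext; simp

theorem pathCoverNumber_induce_le {U : Set V} {p : ℕ} (h : IsPathCoverOn G U p) :
    pathCoverNumber (G.induce U) ≤ p :=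
  Nat.sInf_le (isPathCoverOn_induce_iff.2 h)

theorem isPathCoverOn_pathCoverNumber_induce [Finite V] (U : Set V) :
    IsPathCoverOn G U (pathCoverNumber (G.induce U)) := by
  have := Fintype.ofFinite U
  exact isPathCoverOn_induce_iff.1 (Nat.sInf_mem (s := {p | IsPathCoverOn (G.induce U) _ p})
    ⟨_, isPathCoverOn_induce_iff.2 (isPathPartition_singletons U).isPathCoverOn⟩)

/-- For `W ⊆ U`: `W` is a union of components of `G[U]`. -/
def IsClosedIn (G : SimpleGraph V) (U W : Set V) : Prop :=
  ∀ x ∈ W, ∀ y ∈ U, G.Adj x y → y ∈ W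

theorem SimpleGraph.Walk.support_subset_of_isClosedIn {U W : Set V}
    (hW : IsClosedIn G U W) {a b : V} (p : G.Walk a b)
    (hpU : ∀ z ∈ p.support, z ∈ U) (ha : a ∈ W) : ∀ z ∈ p.support, z ∈ W := by
  induction p with
  | nil => simpa
  | cons h q ih =>
    simp only [Walk.support_cons, List.mem_cons, forall_eq_or_imp] at hpU ⊢
    exact ⟨ha, ih hpU.2 (hW _ ha _ (hpU.2 _ q.start_mem_support) h)⟩

theorem IsClosedIn.subset_of_preconnected {P U W : Set V} (hW : IsClosedIn G U W)
    (hP : (G.induce P).Preconnected) (hPU : P ⊆ U) {x : V} (hxP : x ∈ P) (hxW : x ∈ W) :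
    P ⊆ W := fun y hy => by
  obtain ⟨q⟩ := hP ⟨x, hxP⟩ ⟨y, hy⟩
  refine (q.map (Embedding.induce P).toHom).support_subset_of_isClosedIn hW ?_ hxW _
    (Walk.end_mem_support _)
  simp only [Walk.support_map, List.mem_map]
  rintro _ ⟨z, -, rfl⟩
  exact hPU z.2

theorem isAcyclic_induce_of_forall_isClosedIn {U : Set V}
    (h : ∀ x ∈ U, ∃ W, x ∈ W ∧ IsClosedIn G U W ∧ (G.induce W).IsAcyclic) :
    (G.induce U).IsAcyclic := by
  intro a c hc
  obtain ⟨W, haW, hW, hacyc⟩ := h a a.2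
  set c' := c.map (Embedding.induce (G := G) U).toHom
  have hc'U : ∀ z ∈ c'.support, z ∈ U := by
    simp only [c', Walk.support_map, List.mem_map]
    rintro _ ⟨z, -, rfl⟩
    exact z.2
  have hc'W := c'.support_subset_of_isClosedIn hW hc'U haW
  refine hacyc (c'.induce W hc'W) ?_
  rw [← Walk.isCycle_map_iff_of_injective (f := (Embedding.induce (G := G) W).toHom)
    (Embedding.induce (G := G) W).injective, Walk.map_induce]
  exact hc.map (Embedding.induce (G := G) U).injective

theorem IsDisjointPathsOn.isPathCoverOn {U : Set V} {p : ℕ} (h : IsDisjointPathsOn G U p) :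
    IsPathCoverOn G U p :=
  let ⟨parts, hne, hdisj, hunion, hpath, _⟩ := h
  ⟨parts, hne, hdisj, hunion, hpath⟩

theorem isClosedIn_of_iUnion_eq {ι : Type*} {U : Set V} {parts : ι → Set V}
    (hunion : (⋃ i, parts i) = U)
    (hnadj : ∀ i j, i ≠ j → ∀ u ∈ parts i, ∀ v ∈ parts j, ¬ G.Adj u v) (i : ι) :
    IsClosedIn G U (parts i) := fun y hy z hz hyz => by
  obtain ⟨j, hj⟩ := Set.mem_iUnion.1 (hunion ▸ hz)
  obtain rfl : i = j := by_contra fun hij => hnadj i j hij y hy z hj hyz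
  exact hj

theorem IsDisjointPathsOn.isAcyclic {U : Set V} {p : ℕ} (h : IsDisjointPathsOn G U p) :
    (G.induce U).IsAcyclic :=
  let ⟨parts, _, _, hunion, hpath, hnadj⟩ := h
  isAcyclic_induce_of_forall_isClosedIn fun _ hx =>
    let ⟨i, hi⟩ := Set.mem_iUnion.1 (hunion ▸ hx)
    ⟨parts i, hi, isClosedIn_of_iUnion_eq hunion hnadj i, (hpath i).isAcyclic⟩

/-- Each path of the cover lies inside one of the `p` paths, as these are mutually non-adjacent. -/
theorem IsDisjointPathsOn.le_of_isPathCoverOn {U : Set V} {p q : ℕ}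
    (h : IsDisjointPathsOn G U p) (h' : IsPathCoverOn G U q) : p ≤ q := by
  obtain ⟨parts, hne, hdisj, hunion, hpath, hnadj⟩ := h
  obtain ⟨parts', -, -, hunion', hpath'⟩ := h'
  choose x hx using hne
  choose f hf using fun i =>
    Set.mem_iUnion.1 (hunion'.symm ▸ hunion ▸ Set.mem_iUnion.2 ⟨i, hx i⟩)
  have hinj : Function.Injective f := fun i j hij => by
    have hsub := (isClosedIn_of_iUnion_eq hunion hnadj i).subset_of_preconnected
      (hpath' (f i)).preconnected (hunion' ▸ Set.subset_iUnion parts' (f i)) (hf i) (hx i)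
    by_contra hne
    exact Set.disjoint_left.1 (hdisj hne) (hsub (hij ▸ hf j)) (hx j)
  simpa using Fintype.card_le_of_injective f hinj

theorem IsDisjointPathsOn.le_pathCoverNumber [Finite V] {U : Set V} {p : ℕ}
    (h : IsDisjointPathsOn G U p) : p ≤ pathCoverNumber (G.induce U) :=
  h.le_of_isPathCoverOn (isPathCoverOn_pathCoverNumber_induce U)

/-- The vertex set of the component of `x` in `G[U]` (empty when `x ∉ U`). -/
def componentIn (G : SimpleGraph V) (U : Set V) (x : V) : Set V :=
  {y | ∃ p : G.Walk x y, ∀ z ∈ p.support, z ∈ U}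

section componentIn

variable {U U' : Set V} {x y z : V}

theorem mem_componentIn_self (hx : x ∈ U) : x ∈ componentIn G U x :=
  ⟨Walk.nil, by simpa⟩

theorem componentIn_subset : componentIn G U x ⊆ U :=
  fun y ⟨p, hp⟩ => hp y p.end_mem_support

theorem mem_componentIn_comm (h : y ∈ componentIn G U x) : x ∈ componentIn G U y :=
  let ⟨p, hp⟩ := h
  ⟨p.reverse, fun z hz => hp z (by simpa using hz)⟩

theorem mem_componentIn_trans (hy : y ∈ componentIn G U x) (hz : z ∈ componentIn G U y) :
    z ∈ componentIn G U x :=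
  let ⟨p, hp⟩ := hy
  let ⟨q, hq⟩ := hz
  ⟨p.append q, fun w hw => (Walk.mem_support_append_iff p q).1 hw |>.elim (hp w) (hq w)⟩

theorem componentIn_eq (h : y ∈ componentIn G U x) : componentIn G U y = componentIn G U x :=
  Set.ext fun _ => ⟨mem_componentIn_trans h, mem_componentIn_trans (mem_componentIn_comm h)⟩

theorem mem_componentIn_of_adj (hy : y ∈ componentIn G U x) (hz : z ∈ U) (h : G.Adj y z) :
    z ∈ componentIn G U x :=
  let ⟨p, hp⟩ := hy
  ⟨p.concat h, fun w hw => by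
    simp only [Walk.support_concat, List.mem_append, List.mem_singleton] at hw
    exact hw.elim (hp w) (· ▸ hz)⟩

theorem isClosedIn_componentIn : IsClosedIn G U (componentIn G U x) :=
  fun _ hy _ hz => mem_componentIn_of_adj hy hz

theorem componentIn_disjoint_or_eq :
    Disjoint (componentIn G U x) (componentIn G U y) ∨ componentIn G U x = componentIn G U y := by
  refine or_iff_not_imp_left.2 fun h => ?_
  obtain ⟨z, hzx, hzy⟩ := Set.not_disjoint_iff.1 h
  rw [← componentIn_eq hzx, componentIn_eq hzy]

theorem componentIn_subset_componentIn (h : componentIn G U x ⊆ U') :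
    componentIn G U x ⊆ componentIn G U' x := fun _ ⟨p, hp⟩ =>
  ⟨p, fun z hz => h (p.support_subset_of_isClosedIn isClosedIn_componentIn hp
    (mem_componentIn_self (hp x p.start_mem_support)) z hz)⟩

theorem preconnected_induce_componentIn : (G.induce (componentIn G U x)).Preconnected := by
  rintro ⟨y, hy⟩ ⟨z, hz⟩
  obtain ⟨p, hp⟩ := mem_componentIn_trans (mem_componentIn_comm hy) hz
  exact ⟨p.induce _ (p.support_subset_of_isClosedIn isClosedIn_componentIn hp hy)⟩

end componentIn

theorem IsPathPartition.subset_componentIn {U : Set V} {F : Finset (Set V)}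
    (hF : IsPathPartition G U F) {P : Set V} (hP : P ∈ F) {x c : V} (hxP : x ∈ P)
    (hxc : x ∈ componentIn G U c) : P ⊆ componentIn G U c :=
  isClosedIn_componentIn.subset_of_preconnected (hF.1 P hP).2.preconnected
    (hF.2.2 ▸ Set.subset_sUnion_of_mem hP) hxP hxc

theorem IsPathPartition.exists_mem_subset_componentIn {U : Set V} {F : Finset (Set V)}
    (hF : IsPathPartition G U F) {x : V} (hx : x ∈ U) :
    ∃ P ∈ F, x ∈ P ∧ P ⊆ componentIn G U x :=
  let ⟨P, hP, hxP⟩ := Set.mem_sUnion.1 (hF.2.2 ▸ hx)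
  ⟨P, hP, hxP, hF.subset_componentIn hP hxP (mem_componentIn_self hx)⟩

/-- The components of `G[U]` are the paths. -/
theorem exists_isDisjointPathsOn_of_degreeLeTwoOn [Finite V] {U : Set V}
    (hacyc : (G.induce U).IsAcyclic) (hdeg : DegreeLeTwoOn G U U) :
    ∃ p, IsDisjointPathsOn G U p := by
  classical
  have := Fintype.ofFinite V
  set F := U.toFinset.image (componentIn G U)
  have hcomp : ∀ P ∈ F, ∃ x ∈ U, P = componentIn G U x := by
    simp [F, eq_comm]
  refine ⟨F.card, IsPathPartition.isDisjointPathsOn ⟨fun P hP => ?_, fun P hP Q hQ hPQ => ?_, ?_⟩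
    fun P hP Q hQ hPQ y hy z hz hyz => ?_⟩
  · obtain ⟨x, hx, rfl⟩ := hcomp P hP
    refine ⟨⟨x, mem_componentIn_self hx⟩, inducesPath_of_isAcyclic
      ((connected_iff _).2 ⟨preconnected_induce_componentIn, ⟨⟨x, mem_componentIn_self hx⟩⟩⟩)
      (hacyc.embedding (G.induceHomOfLE componentIn_subset)) fun y hy => ?_⟩
    exact (Set.ncard_le_ncard (Set.inter_subset_inter_right _ componentIn_subset)).trans
      (hdeg y (componentIn_subset hy))
  · obtain ⟨x, -, rfl⟩ := hcomp P hP
    obtain ⟨y, -, rfl⟩ := hcomp Q hQ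
    exact componentIn_disjoint_or_eq.resolve_right hPQ
  · ext y
    simp only [F, Finset.coe_image, Set.coe_toFinset, Set.sUnion_image, Set.mem_iUnion, exists_prop]
    exact ⟨fun ⟨x, _, hy⟩ => componentIn_subset hy, fun hy => ⟨y, hy, mem_componentIn_self hy⟩⟩
  · obtain ⟨x, -, rfl⟩ := hcomp P hP
    obtain ⟨w, -, rfl⟩ := hcomp Q hQ
    have hzx := mem_componentIn_of_adj hy (componentIn_subset hz) hyz
    exact hPQ ((componentIn_eq hzx).symm.trans (componentIn_eq hz))

section branches

variable {U : Set V} {v c₁ c₂ : V}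

theorem not_mem_componentIn_of_adj (hacyc : (G.induce U).IsAcyclic) (hv : v ∈ U)
    (hc₁ : c₁ ∈ U) (hc₂ : c₂ ∈ U) (h₁ : G.Adj v c₁) (h₂ : G.Adj v c₂) (hne : c₁ ≠ c₂) :
    c₂ ∉ componentIn G (U \ {v}) c₁ := by
  classical
  rintro ⟨q, hq⟩
  set q' := (q.induce U fun z hz => (hq z hz).1).bypass
  have hvq : (⟨v, hv⟩ : U) ∉ q'.support := fun h => by
    have := (q.induce U _).support_bypass_subset_support h
    rw [Walk.support_induce, List.mem_attachWith] at this
    exact (hq v this).2 rfl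
  have hadj₁ : (G.induce U).Adj ⟨c₁, hc₁⟩ ⟨v, hv⟩ := h₁.symm
  have hadj₂ : (G.induce U).Adj ⟨v, hv⟩ ⟨c₂, hc₂⟩ := h₂
  have := hacyc.mem_support_of_ne_mem_support_of_adj_of_isPath (Path.singleton hadj₁).2
    (Walk.bypass_isPath _) hadj₂ hvq
  simp only [Path.singleton, Walk.support_cons, Walk.support_nil, List.mem_pair,
    Subtype.mk.injEq] at this
  exact this.elim (fun h => hne h.symm) fun h => h₂.ne h.symm

theorem componentIn_union_subset (hv : v ∈ U) :
    componentIn G (U \ {v}) c₁ ∪ {v} ∪ componentIn G (U \ {v}) c₂ ⊆ U :=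
  Set.union_subset (Set.union_subset (fun _ h => (componentIn_subset h).1)
    (Set.singleton_subset_iff.2 hv)) fun _ h => (componentIn_subset h).1

theorem eq_of_adj_of_mem_componentIn (hacyc : (G.induce U).IsAcyclic) (hv : v ∈ U)
    (hc₁ : c₁ ∈ U) (h₁ : G.Adj v c₁) {y : V} (hy : y ∈ componentIn G (U \ {v}) c₁)
    (hvy : G.Adj v y) : y = c₁ :=
  by_contra fun hne =>
    not_mem_componentIn_of_adj hacyc hv hc₁ (componentIn_subset hy).1 h₁ hvy (Ne.symm hne) hy

theorem inducesPath_componentIn_union [Finite V] (hacyc : (G.induce U).IsAcyclic) (hv : v ∈ U)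
    (hc₁ : c₁ ∈ U) (hc₂ : c₂ ∈ U) (h₁ : G.Adj v c₁) (h₂ : G.Adj v c₂) (hne : c₁ ≠ c₂)
    (hdeg₁ : DegreeLeTwoOn G U (componentIn G (U \ {v}) c₁))
    (hdeg₂ : DegreeLeTwoOn G U (componentIn G (U \ {v}) c₂)) :
    InducesPath G (componentIn G (U \ {v}) c₁ ∪ {v} ∪ componentIn G (U \ {v}) c₂) := by
  have hWU := componentIn_union_subset (G := G) (c₁ := c₁) (c₂ := c₂) hv
  refine inducesPath_of_isAcyclic ?_ (hacyc.embedding (G.induceHomOfLE hWU)) ?_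
  · have hv' : (G.induce {v}).Preconnected := by
      rw [induce_singleton_eq_top]
      exact preconnected_top
    have hC₁ : c₁ ∈ componentIn G (U \ {v}) c₁ := mem_componentIn_self ⟨hc₁, h₁.ne'⟩
    have hC₂ : c₂ ∈ componentIn G (U \ {v}) c₂ := mem_componentIn_self ⟨hc₂, h₂.ne'⟩
    exact connected_induce_union (connected_induce_union preconnected_induce_componentIn hv' hC₁
      rfl h₁.symm).preconnected preconnected_induce_componentIn (Or.inr rfl) hC₂ h₂
  rintro x ((hx | rfl) | hx)
  · exact (Set.ncard_le_ncard (Set.inter_subset_inter_right _ hWU)).trans (hdeg₁ x hx)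
  · refine (Set.ncard_le_ncard (t := {c₁, c₂}) ?_).trans (Set.ncard_pair hne).le
    rintro y ⟨hxy, (hy | rfl) | hy⟩
    · exact Or.inl (eq_of_adj_of_mem_componentIn hacyc hv hc₁ h₁ hy hxy)
    · exact absurd hxy (G.loopless.irrefl _)
    · exact Or.inr (eq_of_adj_of_mem_componentIn hacyc hv hc₂ h₂ hy hxy)
  · exact (Set.ncard_le_ncard (Set.inter_subset_inter_right _ hWU)).trans (hdeg₂ x hx)

end branches

/-- The parts of `F` inside `W` are traded for the single path `W`. -/
theorem pathCoverNumber_induce_add_card_le {U' W : Set V} {F : Finset (Set V)}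
    (hF : IsPathPartition G U' F) (hW : InducesPath G W) (hWne : W.Nonempty)
    (hsub : ∀ P ∈ F, ¬ Disjoint P W → P ⊆ W) {K : Finset (Set V)} (hKF : K ⊆ F)
    (hKW : ∀ P ∈ K, P ⊆ W) :
    pathCoverNumber (G.induce (U' ∪ W)) + K.card ≤ F.card + 1 := by
  classical
  set F' := insert W (F.filter (Disjoint · W))
  have hF' : IsPathPartition G (U' ∪ W) F' := by
    refine ⟨?_, ?_, ?_⟩
    · simp only [F', Finset.mem_insert, Finset.mem_filter]
      rintro P (rfl | ⟨hP, -⟩)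
      exacts [⟨hWne, hW⟩, hF.1 P hP]
    · rw [Finset.coe_insert]
      refine (hF.2.1.subset (Finset.coe_subset.2 (Finset.filter_subset _ _))).insert
        fun P hP _ => ?_
      exact (Finset.mem_filter.1 hP).2.symm
    · rw [Finset.coe_insert, Set.sUnion_insert, Set.union_comm, ← hF.2.2]
      refine Set.Subset.antisymm (Set.union_subset_union_left _
        (Set.sUnion_mono (Finset.coe_subset.2 (Finset.filter_subset _ _)))) ?_
      rintro x (⟨P, hP, hxP⟩ | hxW)
      · by_cases hPW : Disjoint P W
        · exact Or.inl ⟨P, Finset.mem_filter.2 ⟨hP, hPW⟩, hxP⟩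
        · exact Or.inr (hsub P hP hPW hxP)
      · exact Or.inr hxW
  have hpart := pathCoverNumber_induce_le hF'.isPathCoverOn
  have hinsert : F'.card ≤ (F.filter (Disjoint · W)).card + 1 := Finset.card_insert_le _ _
  have hsplit := Finset.card_filter_add_card_filter_not (s := F) (Disjoint · W)
  have hmeet : K.card ≤ (F.filter (¬ Disjoint · W)).card := by
    refine Finset.card_le_card fun P hP => Finset.mem_filter.2 ⟨hKF hP, fun hdisj => ?_⟩
    obtain ⟨x, hx⟩ := (hF.1 P (hKF hP)).1
    exact Set.disjoint_left.1 hdisj hx (hKW P hP hx)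
  omega

theorem pathCoverNumber_induce_add_one_le [Finite V] {U : Set V} {v c₁ c₂ : V}
    (hacyc : (G.induce U).IsAcyclic) (hv : v ∈ U) (hc₁ : c₁ ∈ U) (hc₂ : c₂ ∈ U)
    (h₁ : G.Adj v c₁) (h₂ : G.Adj v c₂) (hne : c₁ ≠ c₂)
    (hdeg₁ : DegreeLeTwoOn G U (componentIn G (U \ {v}) c₁))
    (hdeg₂ : DegreeLeTwoOn G U (componentIn G (U \ {v}) c₂)) :
    pathCoverNumber (G.induce U) + 1 ≤ pathCoverNumber (G.induce (U \ {v})) := by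
  classical
  set C₁ := componentIn G (U \ {v}) c₁
  set C₂ := componentIn G (U \ {v}) c₂
  obtain ⟨F, hF, hcard⟩ :=
    (isPathCoverOn_pathCoverNumber_induce (G := G) (U \ {v})).exists_isPathPartition
  have hmerge : ∀ P ∈ F, ¬ Disjoint P (C₁ ∪ {v} ∪ C₂) → P ⊆ C₁ ∪ {v} ∪ C₂ := by
    intro P hP hPW
    obtain ⟨x, hxP, (hx | rfl) | hx⟩ := Set.not_disjoint_iff.1 hPW
    · exact (hF.subset_componentIn hP hxP hx).trans
        (Set.subset_union_left.trans Set.subset_union_left)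
    · exact absurd rfl (hF.2.2 ▸ Set.subset_sUnion_of_mem hP hxP).2
    · exact (hF.subset_componentIn hP hxP hx).trans Set.subset_union_right
  obtain ⟨P₁, hP₁, hcP₁, hP₁C⟩ := hF.exists_mem_subset_componentIn ⟨hc₁, h₁.ne'⟩
  obtain ⟨P₂, hP₂, hcP₂, hP₂C⟩ := hF.exists_mem_subset_componentIn ⟨hc₂, h₂.ne'⟩
  have hP₁₂ : P₁ ≠ P₂ := fun h =>
    not_mem_componentIn_of_adj hacyc hv hc₁ hc₂ h₁ h₂ hne (hP₁C (h ▸ hcP₂))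
  have hU : U \ {v} ∪ (C₁ ∪ {v} ∪ C₂) = U := by
    refine Set.Subset.antisymm (Set.union_subset Set.sdiff_subset
      (componentIn_union_subset hv)) fun x hx => ?_
    by_cases hxv : x = v
    · exact Or.inr (Or.inl (Or.inr hxv))
    · exact Or.inl ⟨hx, hxv⟩
  have := pathCoverNumber_induce_add_card_le hF
    (inducesPath_componentIn_union hacyc hv hc₁ hc₂ h₁ h₂ hne hdeg₁ hdeg₂) ⟨v, Or.inl (Or.inr rfl)⟩
    hmerge (K := {P₁, P₂}) (Finset.insert_subset hP₁ (Finset.singleton_subset_iff.2 hP₂)) (by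
      simp only [Finset.mem_insert, Finset.mem_singleton]
      rintro P (rfl | rfl)
      exacts [hP₁C.trans (Set.subset_union_left.trans Set.subset_union_left),
        hP₂C.trans Set.subset_union_right])
  rw [hU, Finset.card_pair hP₁₂] at this
  omega

/-- A branch vertex at which all branches but at most one are paths. -/
def IsOuterBranchVertex (G : SimpleGraph V) (U : Set V) (x : V) : Prop :=
  2 < (G.neighborSet x ∩ U).ncard ∧ ∀ d ∈ U, ∀ d' ∈ U, G.Adj x d → G.Adj x d' → d ≠ d' →
    DegreeLeTwoOn G U (componentIn G (U \ {x}) d) ∨ DegreeLeTwoOn G U (componentIn G (U \ {x}) d')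

/-- If the branch at `v` through `c` contains a branch vertex `y`, then a branch at `y` avoiding
`v` and containing a branch vertex would be strictly smaller: descend until none is left. -/
theorem exists_isOuterBranchVertex_of_not_degreeLeTwoOn [Finite V] {U : Set V}
    (hacyc : (G.induce U).IsAcyclic) {v c : V}
    (hbad : ¬ DegreeLeTwoOn G U (componentIn G (U \ {v}) c)) :
    ∃ x ∈ U, IsOuterBranchVertex G U x := by
  induction hn : (componentIn G (U \ {v}) c).ncard using Nat.strong_induction_on
    generalizing v c with
  | _ n ih =>
  obtain ⟨y, hy, hybr⟩ : ∃ y ∈ componentIn G (U \ {v}) c, 2 < (G.neighborSet y ∩ U).ncard := by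
    simpa [DegreeLeTwoOn] using hbad
  obtain ⟨hyU, hyv⟩ := componentIn_subset hy
  by_cases hgood : IsOuterBranchVertex G U y
  · exact ⟨y, hyU, hgood⟩
  obtain ⟨d, hd, d', hd', hyd, hyd', hne, hbad_d, hbad_d'⟩ : ∃ d ∈ U, ∃ d' ∈ U, G.Adj y d ∧
      G.Adj y d' ∧ d ≠ d' ∧ ¬ DegreeLeTwoOn G U (componentIn G (U \ {y}) d) ∧
      ¬ DegreeLeTwoOn G U (componentIn G (U \ {y}) d') := by
    simpa [IsOuterBranchVertex, hybr, not_or] using hgood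
  have descend : ∀ e ∈ U, G.Adj y e → v ∉ componentIn G (U \ {y}) e →
      ¬ DegreeLeTwoOn G U (componentIn G (U \ {y}) e) → ∃ x ∈ U, IsOuterBranchVertex G U x := by
    intro e he hye hve hbad_e
    have hev : e ≠ v := fun h => hve (h ▸ mem_componentIn_self ⟨he, hye.ne'⟩)
    have hsub : componentIn G (U \ {y}) e ⊆ componentIn G (U \ {v}) c := by
      rw [← componentIn_eq (mem_componentIn_of_adj hy ⟨he, hev⟩ hye)]
      exact componentIn_subset_componentIn fun z hz =>
        ⟨(componentIn_subset hz).1, fun hzv => hve (Set.mem_singleton_iff.1 hzv ▸ hz)⟩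
    have hlt : (componentIn G (U \ {y}) e).ncard < n := hn ▸ Set.ncard_lt_ncard
      (Set.ssubset_iff_subset_ne.2 ⟨hsub, fun h => (componentIn_subset (h ▸ hy)).2 rfl⟩)
    exact ih _ hlt hbad_e rfl
  by_cases hvd : v ∈ componentIn G (U \ {y}) d
  · refine descend d' hd' hyd' (fun hvd' => ?_) hbad_d'
    exact not_mem_componentIn_of_adj hacyc hyU hd hd' hyd hyd' hne
      (mem_componentIn_trans hvd (mem_componentIn_comm hvd'))
  · exact descend d hd hyd hvd hbad_d

theorem exists_branch_vertex_with_two_path_branches [Finite V] {U : Set V}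
    (hacyc : (G.induce U).IsAcyclic) (h : ¬ DegreeLeTwoOn G U U) :
    ∃ v ∈ U, ∃ c₁ ∈ U, ∃ c₂ ∈ U, G.Adj v c₁ ∧ G.Adj v c₂ ∧ c₁ ≠ c₂ ∧
      DegreeLeTwoOn G U (componentIn G (U \ {v}) c₁) ∧
      DegreeLeTwoOn G U (componentIn G (U \ {v}) c₂) := by
  obtain ⟨x, hx, hxbr, hgood⟩ : ∃ x ∈ U, IsOuterBranchVertex G U x := by
    obtain ⟨v, hv, hvbr⟩ : ∃ v ∈ U, 2 < (G.neighborSet v ∩ U).ncard := by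
      simpa [DegreeLeTwoOn] using h
    by_cases hgood : IsOuterBranchVertex G U v
    · exact ⟨v, hv, hgood⟩
    obtain ⟨d, -, -, -, -, -, -, hbad, -⟩ : ∃ d ∈ U, ∃ d' ∈ U, G.Adj v d ∧
        G.Adj v d' ∧ d ≠ d' ∧ ¬ DegreeLeTwoOn G U (componentIn G (U \ {v}) d) ∧
        ¬ DegreeLeTwoOn G U (componentIn G (U \ {v}) d') := by
      simpa [IsOuterBranchVertex, hvbr, not_or] using hgood
    exact exists_isOuterBranchVertex_of_not_degreeLeTwoOn hacyc hbad
  obtain ⟨a, b, c, ⟨hxa, ha⟩, ⟨hxb, hb⟩, ⟨hxc, hc⟩, hab, hac, hbc⟩ :=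
    (Set.two_lt_ncard_iff).1 hxbr
  by_cases hfa : DegreeLeTwoOn G U (componentIn G (U \ {x}) a)
  · by_cases hfb : DegreeLeTwoOn G U (componentIn G (U \ {x}) b)
    · exact ⟨x, hx, a, ha, b, hb, hxa, hxb, hab, hfa, hfb⟩
    · exact ⟨x, hx, a, ha, c, hc, hxa, hxc, hac, hfa,
        (hgood b hb c hc hxb hxc hbc).resolve_left hfb⟩
  · exact ⟨x, hx, b, hb, c, hc, hxb, hxc, hbc, (hgood a ha b hb hxa hxb hab).resolve_left hfa,
      (hgood a ha c hc hxa hxc hac).resolve_left hfa⟩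

/-- `Δ(F) ≥ P(F)` for the forest `F = G[U]`. -/
theorem exists_isDisjointPathsOn_of_isAcyclic [Finite V] (U : Set V)
    (hacyc : (G.induce U).IsAcyclic) : ∃ (Q : Finset V) (p : ℕ),
      IsDisjointPathsOn G (U \ ↑Q) p ∧ pathCoverNumber (G.induce U) + Q.card ≤ p := by
  classical
  induction hn : U.ncard using Nat.strong_induction_on generalizing U with
  | _ n ih =>
  by_cases hdeg : DegreeLeTwoOn G U U
  · obtain ⟨p, hp⟩ := exists_isDisjointPathsOn_of_degreeLeTwoOn hacyc hdeg
    exact ⟨∅, p, by simpa using hp, by simpa using pathCoverNumber_induce_le hp.isPathCoverOn⟩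
  obtain ⟨v, hv, c₁, hc₁, c₂, hc₂, h₁, h₂, hne, hdeg₁, hdeg₂⟩ :=
    exists_branch_vertex_with_two_path_branches hacyc hdeg
  obtain ⟨Q, p, hp, hle⟩ := ih _ (hn ▸ Set.ncard_sdiff_singleton_lt_of_mem hv) (U \ {v})
    (hacyc.embedding (G.induceHomOfLE Set.sdiff_subset)) rfl
  refine ⟨insert v Q, p, ?_, ?_⟩
  · rwa [Finset.coe_insert, Set.insert_eq, ← Set.sdiff_sdiff]
  · have := pathCoverNumber_induce_add_one_le hacyc hv hc₁ hc₂ h₁ h₂ hne hdeg₁ hdeg₂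
    have := Finset.card_insert_le v Q
    omega

end

theorem deltaLow_eq_Tminus {V : Type*} [Fintype V] (G : SimpleGraph V) :
    deltaLow G = Tminus G := by
  classical
  refine csSup_eq_csSup_of_forall_exists_le ?_ ?_
  · rintro _ ⟨S, p, hp, rfl⟩
    exact ⟨_, ⟨S, hp.isAcyclic, rfl⟩, by linarith [hp.le_pathCoverNumber]⟩
  · rintro _ ⟨S, hS, rfl⟩
    obtain ⟨Q, p, hp, hle⟩ := exists_isDisjointPathsOn_of_isAcyclic _ hS
    refine ⟨_, ⟨S ∪ Q, p, by rwa [Finset.coe_union, Set.compl_union, ← Set.sdiff_eq], rfl⟩, ?_⟩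
    have := Finset.card_union_le S Q
    omega
end

section
/- For every graph G, M(G) ≤ T⁺(G). -/
open SimpleGraph

/-!
A null vector of a matrix in `S(G)` that vanishes on a zero forcing set vanishes everywhere:
each forcing step `u → v` reads off row `u` of `A x = 0`, in which only `A u v * x v` survives.
Hence `M(G) ≤ Z(G)`. Colouring `S` in addition to a zero forcing set of `G \ S` gives
`Z(G) ≤ Z(G \ S) + |S|`, so it remains to show `Z(F) ≤ P(F)` for a forest `F`: the first
vertices of the paths of a path cover force everything. Otherwise the last coloured vertex of
each unfinished path is blocked by an uncoloured neighbour off its own path, on another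
unfinished path; following these edges from path to path closes a cycle in `F`.
-/

open Function

theorem Finite.exists_isPeriodicPt {α : Type*} [Finite α] [Nonempty α] (f : α → α) :
    ∃ x n, 0 < n ∧ IsPeriodicPt f n x := by
  obtain ⟨a, b, hab, heq⟩ :=
    Finite.exists_ne_map_eq_of_infinite (fun n : ℕ => f^[n] (Classical.arbitrary α))
  wlog hlt : a < b generalizing a b
  · exact this b a hab.symm heq.symm (hab.symm.lt_of_le (not_lt.1 hlt))
  refine ⟨f^[a] (Classical.arbitrary α), b - a, Nat.sub_pos_of_lt hlt, ?_⟩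
  rw [IsPeriodicPt, IsFixedPt, ← iterate_add_apply, Nat.sub_add_cancel hlt.le]
  exact heq.symm

namespace SimpleGraph

variable {W : Type*} {H : SimpleGraph W}

theorem Preconnected.reachable_deleteEdges_of_induce {P : Set W}
    (hP : (H.induce P).Preconnected) {e : Sym2 W} {w : W} (hwe : w ∈ e) (hwP : w ∉ P)
    {u v : W} (hu : u ∈ P) (hv : v ∈ P) : (H.deleteEdges {e}).Reachable u v := by
  let φ : H.induce P →g H.deleteEdges {e} :=
    { toFun := Subtype.val
      map_rel' := fun {a b} hab => by
        refine (deleteEdges_adj ..).2 ⟨hab, fun he => hwP ?_⟩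
        rw [Set.mem_singleton_iff] at he
        rcases Sym2.mem_iff.1 (he ▸ hwe) with rfl | rfl
        exacts [a.2, b.2] }
  exact (hP ⟨u, hu⟩ ⟨v, hv⟩).map φ

theorem IsAcyclic.exists_fixedPt_of_parts {ι : Type*} [Finite ι] [Nonempty ι]
    (hH : H.IsAcyclic) {P : ι → Set W} (hdisj : Pairwise (Disjoint on P))
    (hconn : ∀ i, (H.induce (P i)).Preconnected) (f : ι → ι) (x y : ι → W)
    (hx : ∀ i, x i ∈ P i) (hy : ∀ i, y i ∈ P (f i)) (hadj : ∀ i, H.Adj (x i) (y i))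
    (hxy : ∀ i j, x i ≠ y j) : ∃ i, f i = i := by
  by_contra! hf
  obtain ⟨i, m, hm, hper⟩ := Finite.exists_isPeriodicPt f
  -- `x i — y i` is a bridge, yet the orbit of `i` leads from `y i` back into `P i` avoiding it
  set H' := H.deleteEdges {s(x i, y i)}
  have hreach : ∀ j, ∀ u ∈ P j, ∀ v ∈ P j, H'.Reachable u v := fun j u hu v hv => by
    by_cases hj : j = i
    · subst hj
      exact (hconn j).reachable_deleteEdges_of_induce (Sym2.mem_mk_right _ _)
        (Set.disjoint_left.1 (hdisj (hf j)) (hy j)) hu hv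
    · exact (hconn j).reachable_deleteEdges_of_induce (Sym2.mem_mk_left _ _)
        (Set.disjoint_left.1 (hdisj (Ne.symm hj)) (hx i)) hu hv
  have hbridge : ¬ H'.Reachable (y i) (x i) := fun h =>
    isBridge_iff.1 (isAcyclic_iff_forall_adj_isBridge.1 hH (hadj i)) h.symm
  have hstep : ∀ j, ∀ v ∈ P j, H'.Reachable (y i) v →
      j ≠ i ∧ H'.Reachable (y i) (y j) := fun j v hv hrv => by
    have hxj : H'.Reachable (y i) (x j) := hrv.trans (hreach j v hv (x j) (hx j))
    have hji : j ≠ i := by rintro rfl; exact hbridge hxj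
    refine ⟨hji, hxj.trans (Adj.reachable ((deleteEdges_adj ..).2 ⟨hadj j, ?_⟩))⟩
    rw [Set.mem_singleton_iff, Sym2.eq_iff]
    rintro (⟨h, -⟩ | ⟨h, -⟩)
    · exact Set.disjoint_left.1 (hdisj hji) (hx j) (h ▸ hx i)
    · exact hxy j i h
  have horbit : ∀ t, H'.Reachable (y i) (y (f^[t] i)) := by
    intro t
    induction t with
    | zero => rfl
    | succ t ih =>
      rw [iterate_succ_apply']
      exact (hstep _ _ (hy _) ih).2
  obtain ⟨k, rfl⟩ := Nat.exists_eq_succ_of_ne_zero hm.ne'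
  exact (hstep _ _ (hy _) (horbit k)).1 (by rw [← iterate_succ_apply' f]; exact hper.eq)

theorem pathGraph_exists_boundary {n : ℕ} (C : Set (Fin n))
    (h0 : ∀ a : Fin n, a.val = 0 → a ∈ C) (hC : ∃ b, b ∉ C) :
    ∃ a b, (pathGraph n).Adj a b ∧ a ∈ C ∧ b ∉ C ∧ ∀ c, (pathGraph n).Adj a c → c ≠ b → c ∈ C := by
  classical
  have hex : ∃ k, ∃ hk : k < n, (⟨k, hk⟩ : Fin n) ∉ C := by
    obtain ⟨b, hb⟩ := hC
    exact ⟨b.val, b.isLt, hb⟩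
  obtain ⟨hk, hkC⟩ := Nat.find_spec hex
  set k := Nat.find hex
  have hmin : ∀ c : Fin n, c.val < k → c ∈ C := fun c hc => by
    by_contra h
    exact Nat.find_min hex hc ⟨c.isLt, h⟩
  have hpos : 0 < k := Nat.pos_of_ne_zero fun h => hkC (h0 _ h)
  refine ⟨⟨k - 1, by omega⟩, ⟨k, hk⟩, ?_, hmin _ (by simp only; omega), hkC, ?_⟩
  · rw [pathGraph_adj]; left; simp only; omega
  · intro c hc hcb
    rw [pathGraph_adj] at hc
    refine hmin c ?_
    have : c.val ≠ k := fun h => hcb (Fin.ext h)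
    simp only at hc
    omega

end SimpleGraph


section

variable {W : Type*} {H : SimpleGraph W}

theorem InducesPath.preconnected_s11 {P : Set W} (hP : InducesPath H P) :
    (H.induce P).Preconnected := by
  obtain ⟨n, ⟨φ⟩⟩ := hP
  exact φ.preconnected_iff.2 (pathGraph_preconnected n)

theorem InducesPath.exists_end {P : Set W} (hP : InducesPath H P) (hne : P.Nonempty) :
    ∃ s ∈ P, ∀ C : Set W, s ∈ C → ¬ P ⊆ C → ∃ z ∈ P, ∃ w, H.Adj z w ∧ z ∈ C ∧ w ∉ C ∧
      ∀ c ∈ P, H.Adj z c → c ≠ w → c ∈ C := by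
  obtain ⟨n, ⟨φ⟩⟩ := hP
  have hn : 0 < n := (φ ⟨_, hne.some_mem⟩).pos
  refine ⟨φ.symm ⟨0, hn⟩, (φ.symm _).2, fun C hs hPC => ?_⟩
  obtain ⟨v, hvP, hvC⟩ := Set.not_subset.1 hPC
  obtain ⟨a, b, hab, haC, hbC, hnbr⟩ := pathGraph_exists_boundary {a | (φ.symm a : W) ∈ C}
    (fun a ha => by obtain rfl : a = ⟨0, hn⟩ := Fin.ext ha; exact hs)
    ⟨φ ⟨v, hvP⟩, by simpa using hvC⟩
  refine ⟨φ.symm a, (φ.symm a).2, φ.symm b, φ.symm.map_rel_iff.2 hab, haC, hbC,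
    fun c hcP hac hcb => ?_⟩
  have hc : φ.symm (φ ⟨c, hcP⟩) = ⟨c, hcP⟩ := φ.symm_apply_apply _
  simpa [hc] using hnbr (φ ⟨c, hcP⟩) (by rw [← φ.symm.map_rel_iff, hc]; exact hac)
    (fun h => hcb (by rw [← h, hc]))

theorem SimpleGraph.IsAcyclic.exists_isZeroForcingSet_card_le (hH : H.IsAcyclic) {p : ℕ}
    (hcov : IsPathCoverOn H Set.univ p) :
    ∃ B : Finset W, IsZeroForcingSet H ↑B ∧ B.card ≤ p := by
  classical
  obtain ⟨P, hne, hdisj, hunion, hpath⟩ := hcov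
  choose s _ hs using fun i => (hpath i).exists_end (hne i)
  refine ⟨Finset.univ.image s, ?_, Finset.card_image_le.trans (by simp)⟩
  by_contra hB
  set C := {v | ZFClosed H ↑(Finset.univ.image s) v}
  have hmem : ∀ v, ∃ i, v ∈ P i := fun v => Set.mem_iUnion.1 (hunion ▸ Set.mem_univ v)
  have hblocked : ∀ i, ¬ P i ⊆ C → ∃ z ∈ P i, ∃ c, H.Adj z c ∧ z ∈ C ∧ c ∉ C ∧ c ∉ P i := by
    intro i hi
    obtain ⟨z, hzP, w, hzw, hzC, hwC, hnbr⟩ := hs i C (ZFClosed.init _ (by simp)) hi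
    obtain ⟨c, hzc, hcw, hcC⟩ : ∃ c, H.Adj z c ∧ c ≠ w ∧ c ∉ C := by
      by_contra! h
      exact hwC (ZFClosed.force z w hzC hzw h)
    exact ⟨z, hzP, c, hzc, hzC, hcC, fun hcP => hcC (hnbr c hcP hzc hcw)⟩
  let D := {i // ¬ P i ⊆ C}
  have hD : Nonempty D := by
    obtain ⟨v, hv⟩ := not_forall.1 hB
    obtain ⟨i, hi⟩ := hmem v
    exact ⟨⟨i, fun h => hv (h hi)⟩⟩
  have hnext : ∀ i : D, ∃ j : D, ∃ z c, z ∈ P i.1 ∧ c ∈ P j.1 ∧ H.Adj z c ∧ z ∈ C ∧ c ∉ C ∧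
      j ≠ i := by
    intro i
    obtain ⟨z, hzP, c, hzc, hzC, hcC, hcP⟩ := hblocked i.1 i.2
    obtain ⟨j, hj⟩ := hmem c
    exact ⟨⟨j, fun h => hcC (h hj)⟩, z, c, hzP, hj, hzc, hzC, hcC,
      fun h => hcP (congrArg Subtype.val h ▸ hj)⟩
  choose f x y hx hy hadj hxC hyC hf using hnext
  obtain ⟨i, hi⟩ := hH.exists_fixedPt_of_parts (P := fun i : D => P i.1)
    (fun i j hij => hdisj (Subtype.coe_injective.ne hij)) (fun i => (hpath i.1).preconnected_s11)
    f x y hx hy hadj (fun i j h => hyC j (h ▸ hxC i))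
  exact hf i hi

variable [Fintype W]

variable (H) in
theorem isPathCoverOn_univ_card : IsPathCoverOn H Set.univ (Fintype.card W) := by
  let e := (Fintype.equivFin W).symm
  refine ⟨fun i => {e i}, fun i => Set.singleton_nonempty _,
    fun i j hij => Set.disjoint_singleton.2 (e.injective.ne hij), by simp, fun i => ?_⟩
  refine ⟨1, ⟨RelIso.mk (Equiv.ofUnique _ _) fun {a b} => ?_⟩⟩
  obtain rfl := Subsingleton.elim a b
  exact iff_of_false (pathGraph 1).irrefl (H.induce _).irrefl

variable (H) in
theorem exists_isZeroForcingSet_card_eq :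
    ∃ B : Finset W, IsZeroForcingSet H ↑B ∧ B.card = zeroForcingNumber H :=
  Nat.sInf_mem (s := {k | ∃ B : Finset W, IsZeroForcingSet H ↑B ∧ B.card = k})
    ⟨_, Finset.univ, fun v => ZFClosed.init v (Finset.mem_coe.2 (Finset.mem_univ v)), rfl⟩

theorem zeroForcingNumber_le_card {B : Finset W} (hB : IsZeroForcingSet H ↑B) :
    zeroForcingNumber H ≤ B.card :=
  Nat.sInf_le ⟨B, hB, rfl⟩

theorem SimpleGraph.IsAcyclic.zeroForcingNumber_le_pathCoverNumber (hH : H.IsAcyclic) :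
    zeroForcingNumber H ≤ pathCoverNumber H := by
  have hP : IsPathCoverOn H Set.univ (pathCoverNumber H) :=
    Nat.sInf_mem (s := {p | IsPathCoverOn H Set.univ p}) ⟨_, isPathCoverOn_univ_card H⟩
  obtain ⟨B, hB, hcard⟩ := hH.exists_isZeroForcingSet_card_le hP
  exact (zeroForcingNumber_le_card hB).trans hcard

end

theorem IsZeroForcingSet.of_induce {V : Type*} {G : SimpleGraph V} {s : Set V} {B : Set s}
    (hB : IsZeroForcingSet (G.induce s) B) : IsZeroForcingSet G (Subtype.val '' B ∪ sᶜ) := by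
  have hlift : ∀ u : s, ZFClosed (G.induce s) B u → ZFClosed G (Subtype.val '' B ∪ sᶜ) u := by
    intro u hu
    induction hu with
    | init w hw => exact ZFClosed.init _ (Or.inl ⟨w, hw, rfl⟩)
    | force u w _ huw _ ihu ihf =>
      refine ZFClosed.force _ _ ihu huw fun w' huw' hw' => ?_
      by_cases hw's : w' ∈ s
      · exact ihf ⟨w', hw's⟩ huw' (Subtype.coe_ne_coe.1 hw')
      · exact ZFClosed.init _ (Or.inr hw's)
  intro v
  by_cases hv : v ∈ s
  · exact hlift ⟨v, hv⟩ (hB ⟨v, hv⟩)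
  · exact ZFClosed.init _ (Or.inr hv)

theorem zeroForcingNumber_le_induce_compl_add_card {V : Type*} [Fintype V] [DecidableEq V]
    (G : SimpleGraph V) (S : Finset V) :
    zeroForcingNumber G ≤ zeroForcingNumber (G.induce ((↑S : Set V)ᶜ)) + S.card := by
  obtain ⟨B, hB, hcard⟩ := exists_isZeroForcingSet_card_eq (G.induce ((↑S : Set V)ᶜ))
  have hBS : IsZeroForcingSet G ↑(B.image Subtype.val ∪ S) := by
    simpa using hB.of_induce
  calc zeroForcingNumber G ≤ (B.image Subtype.val ∪ S).card := zeroForcingNumber_le_card hBS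
    _ ≤ (B.image Subtype.val).card + S.card := Finset.card_union_le _ _
    _ ≤ _ := hcard ▸ Nat.add_le_add_right Finset.card_image_le _

theorem IsZeroForcingSet.eq_zero_of_mulVec_eq_zero {V : Type*} [Fintype V] {G : SimpleGraph V}
    {A : Matrix V V ℝ} (hA : MatchesGraph G A) {B : Set V} (hB : IsZeroForcingSet G B)
    {x : V → ℝ} (hx : A.mulVec x = 0) (hxB : ∀ b ∈ B, x b = 0) : x = 0 := by
  funext v
  change x v = 0
  induction hB v with
  | init v hv => exact hxB v hv
  | force u v _ huv _ ihu ihf =>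
    have hrow : ∑ j, A u j * x j = 0 := congrFun hx u
    rw [Finset.sum_eq_single v] at hrow
    · exact (mul_eq_zero.1 hrow).resolve_left ((hA.2 u v (G.ne_of_adj huv)).2 huv)
    · intro j _ hjv
      by_cases hju : j = u
      · rw [hju, ihu, mul_zero]
      by_cases hadj : G.Adj u j
      · rw [ihf j hadj hjv, mul_zero]
      · rw [not_ne_iff.1 (mt (hA.2 u j (Ne.symm hju)).1 hadj), zero_mul]
    · exact fun h => (h (Finset.mem_univ v)).elim

theorem matNullity_le_card {V : Type*} [Fintype V] {G : SimpleGraph V} {A : Matrix V V ℝ}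
    (hA : MatchesGraph G A) {B : Finset V} (hB : IsZeroForcingSet G ↑B) :
    matNullity A ≤ B.card := by
  let restrict : LinearMap.ker A.mulVecLin →ₗ[ℝ] (B → ℝ) :=
    (LinearMap.funLeft ℝ ℝ Subtype.val).comp (LinearMap.ker A.mulVecLin).subtype
  have hinj : Function.Injective restrict := by
    refine (injective_iff_map_eq_zero restrict).2 fun ⟨x, hx⟩ hx0 => Subtype.ext ?_
    exact hB.eq_zero_of_mulVec_eq_zero hA (LinearMap.mem_ker.1 hx)
      fun b hb => congrFun hx0 ⟨b, hb⟩
  simpa [matNullity] using LinearMap.finrank_le_finrank_of_injective hinj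

theorem maxNullity_le_zeroForcingNumber {V : Type*} [Fintype V] [DecidableEq V]
    (G : SimpleGraph V) : maxNullity G ≤ zeroForcingNumber G := by
  obtain ⟨B, hB, hcard⟩ := exists_isZeroForcingSet_card_eq G
  refine csSup_le' ?_
  rintro _ ⟨A, hA, rfl⟩
  exact hcard ▸ matNullity_le_card hA hB

theorem zeroForcingNumber_le_Tplus {V : Type*} [Fintype V] [DecidableEq V] (G : SimpleGraph V) :
    zeroForcingNumber G ≤ Tplus G := by
  refine le_csInf ⟨_, Finset.univ, fun v => absurd v.2 (by simp), rfl⟩ ?_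
  rintro _ ⟨S, hS, rfl⟩
  exact (zeroForcingNumber_le_induce_compl_add_card G S).trans
    (Nat.add_le_add_right hS.zeroForcingNumber_le_pathCoverNumber _)

theorem maxNullity_le_Tplus {V : Type*} [Fintype V] [DecidableEq V]
    (G : SimpleGraph V) :
    maxNullity G ≤ Tplus G :=
  (maxNullity_le_zeroForcingNumber G).trans (zeroForcingNumber_le_Tplus G)
end

section
/- Let G be a connected graph with n vertices and m edges, and let S be a vertex set such that G∖S is acyclic. Then there exists S' ⊆ S with |S'| ≤ m - n + 1 such that G∖S' is acyclic. -/
open SimpleGraph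

/-!
Extend the forest `G - S` to a spanning tree `T` of `G`. Each of the `m - n + 1` edges of `G`
outside `T` has an endpoint in `S`; choosing one such endpoint per edge gives `S'`, and `G - S'`
is a subgraph of `T`, hence acyclic.
-/

open Finset

namespace SimpleGraph

variable {V : Type*}

lemma isAcyclic_spanningCoe_iff {s : Set V} {H : SimpleGraph s} :
    H.spanningCoe.IsAcyclic ↔ H.IsAcyclic := by
  refine ⟨fun h ↦ h.of_map _, fun h u c hc ↦ ?_⟩
  have hs : ∀ x ∈ c.support, x ∈ s := by
    intro x hx
    obtain ⟨e, he, hxe⟩ := (Walk.mem_support_iff_exists_mem_edges_of_not_nil hc.not_nil).1 hx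
    have := c.edges_subset_edgeSet he
    induction e using Sym2.ind with
    | h a b =>
      obtain ⟨a', b', -, rfl, rfl⟩ := (map_adj _ _ _ _).1 this
      rcases Sym2.mem_iff.1 hxe with rfl | rfl
      exacts [a'.2, b'.2]
  have hH : (H.spanningCoe.induce s).IsAcyclic := by rwa [induce_spanningCoe]
  refine hH (c.induce s hs) ?_
  rw [← Walk.isCycle_map_iff_of_injective (f := (Embedding.induce s).toHom) Subtype.val_injective,
    Walk.map_induce]
  exact hc

lemma IsAcyclic.induce_of_forall_edge_exists_notMem {G T : SimpleGraph V} {s : Set V}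
    (hT : T.IsAcyclic) (h : ∀ e ∈ G.edgeSet, e ∉ T.edgeSet → ∃ x ∈ e, x ∉ s) :
    (G.induce s).IsAcyclic := by
  refine hT.comap ⟨Subtype.val, fun {u v} huv ↦ ?_⟩ Subtype.val_injective
  by_contra hT
  obtain ⟨x, hx, hxs⟩ := h s(u, v) huv hT
  rcases Sym2.mem_iff.1 hx with rfl | rfl
  exacts [hxs u.2, hxs v.2]

end SimpleGraph

theorem Finset.exists_subset_card_le_forall_exists {α β : Type*} [DecidableEq α]
    {D : Finset β} {S : Finset α} {r : β → α → Prop} (h : ∀ e ∈ D, ∃ x ∈ S, r e x) :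
    ∃ S' ⊆ S, #S' ≤ #D ∧ ∀ e ∈ D, ∃ x ∈ S', r e x := by
  choose f hfS hfr using h
  refine ⟨D.attach.image fun e ↦ f e.1 e.2, ?_, card_image_le.trans card_attach.le, ?_⟩
  · simpa [Finset.image_subset_iff] using fun e he ↦ hfS e he
  · exact fun e he ↦ ⟨f e he, mem_image_of_mem _ (mem_attach _ ⟨e, he⟩), hfr e he⟩

theorem exists_small_acyclic_deletion {V : Type*} [Fintype V] [DecidableEq V]
    (G : SimpleGraph V) [DecidableRel G.Adj] (hG : G.Connected)
    (S : Finset V) (hS : (G.induce ((↑S : Set V)ᶜ)).IsAcyclic) :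
    ∃ S' ⊆ S, (S'.card : ℤ) ≤ (G.edgeFinset.card : ℤ) - Fintype.card V + 1 ∧
      (G.induce ((↑S' : Set V)ᶜ)).IsAcyclic := by
  classical
  obtain ⟨T, hST, hTG, hT⟩ := hG.exists_isTree_le_of_le_of_isAcyclic
    (spanningCoe_induce_le G _) (isAcyclic_spanningCoe_iff.2 hS)
  have hmeet : ∀ e ∈ G.edgeFinset \ T.edgeFinset, ∃ x ∈ S, x ∈ e := by
    intro e he
    rw [mem_sdiff, mem_edgeFinset, mem_edgeFinset] at he
    induction e using Sym2.ind with
    | h u v =>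
      by_contra! hmem
      exact he.2 (hST ((map_adj _ _ _ _).2 ⟨⟨u, fun hu ↦ hmem u hu (Sym2.mem_mk_left u v)⟩,
        ⟨v, fun hv ↦ hmem v hv (Sym2.mem_mk_right u v)⟩, he.1, rfl, rfl⟩))
  obtain ⟨S', hS'S, hcard, hS'⟩ := exists_subset_card_le_forall_exists hmeet
  refine ⟨S', hS'S, ?_, hT.isAcyclic.induce_of_forall_edge_exists_notMem fun e he heT ↦ ?_⟩
  · have hm := card_sdiff_of_subset (edgeFinset_mono hTG)
    have hn := hT.card_edgeFinset
    have hle := card_le_card (edgeFinset_mono hTG)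
    omega
  · obtain ⟨x, hx, hxe⟩ := hS' e (by simpa using ⟨he, heT⟩)
    exact ⟨x, hxe, by simpa using hx⟩
end
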